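/- Let α, β > 0 with α < β, let λ : [0,∞) → [0,∞) be a bounded measurable function such that lim_{t→∞} λ(t) = λ∞ exists, and let h : [0,∞) → [0,∞) be a bounded measurable function satisfying the renewal equation h(t) = λ(t) + ∫_0^t α·e^{−β(t−s)}·h(s) ds for all t ≥ 0. Then lim_{t→∞} h(t) = λ∞ / (1 − α/β). -/

import Mathlib

/-!
Let `U = limsup h` and `c > U`. Then `h ≤ max h c`, and `max h c` is eventually the constant `c`,
so by dominated convergence its convolution `∫_0^t μ(t-s) (max h c)(s) ds` with a nonnegative
integrable kernel tends to `n* c`, where `n* = ∫_0^∞ μ`. The renewal equation therefore gives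
`U ≤ λ∞ + n* c` for every `c > U`, hence `U ≤ λ∞ + n* U`, i.e. `U ≤ λ∞ / (1 - n*)` as `n* < 1`.
Since `-h` solves the renewal equation with background `-λ`, the same bound applied to `-h`
bounds `liminf h` from below. For the exponential kernel, `n* = α / β`.
-/

open MeasureTheory Filter Set Topology

noncomputable def halfLineConv (μ f : ℝ → ℝ) (t : ℝ) : ℝ := ∫ s in (0:ℝ)..t, μ (t - s) * f s

section

variable {μ f g : ℝ → ℝ} {M : ℝ}

theorem halfLineConv_eq_setIntegral {t : ℝ} (ht : 0 ≤ t) :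
    halfLineConv μ f t = ∫ u in Ioc 0 t, μ u * f (t - u) := by
  have hsub := intervalIntegral.integral_comp_sub_left (a := 0) (b := t)
    (fun s => μ (t - s) * f s) t
  simp only [sub_self, sub_zero, sub_sub_cancel] at hsub
  rw [halfLineConv, ← intervalIntegral.integral_of_le ht, hsub]

theorem halfLineConv_neg (t : ℝ) : halfLineConv μ (-f) t = -halfLineConv μ f t := by
  simp only [halfLineConv, Pi.neg_apply, mul_neg, intervalIntegral.integral_neg]

theorem integrableOn_mul_comp_sub (hμ : IntegrableOn μ (Ioi 0)) (hf : Measurable f)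
    (hM : ∀ s, 0 ≤ s → |f s| ≤ M) (t : ℝ) :
    IntegrableOn (fun u => μ u * f (t - u)) (Ioc 0 t) := by
  refine (hμ.mono_set Ioc_subset_Ioi_self).mul_bdd (c := M)
    (hf.comp (measurable_const.sub measurable_id)).aestronglyMeasurable ?_
  filter_upwards [ae_restrict_mem measurableSet_Ioc] with u hu
  exact hM _ (sub_nonneg.2 hu.2)

theorem halfLineConv_mono (hμ_nonneg : ∀ u, 0 < u → 0 ≤ μ u) (hμ : IntegrableOn μ (Ioi 0))
    (hf : Measurable f) (hg : Measurable g) (hfM : ∀ s, 0 ≤ s → |f s| ≤ M)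
    (hgM : ∀ s, 0 ≤ s → |g s| ≤ M) (hfg : f ≤ g) {t : ℝ} (ht : 0 ≤ t) :
    halfLineConv μ f t ≤ halfLineConv μ g t := by
  rw [halfLineConv_eq_setIntegral ht, halfLineConv_eq_setIntegral ht]
  exact setIntegral_mono_on (integrableOn_mul_comp_sub hμ hf hfM t)
    (integrableOn_mul_comp_sub hμ hg hgM t) measurableSet_Ioc
    fun u hu => mul_le_mul_of_nonneg_left (hfg _) (hμ_nonneg u hu.1)

theorem tendsto_halfLineConv {c : ℝ} (hμ : IntegrableOn μ (Ioi 0)) (hf : Measurable f)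
    (hM : ∀ s, 0 ≤ s → |f s| ≤ M) (hlim : Tendsto f atTop (𝓝 c)) :
    Tendsto (halfLineConv μ f) atTop (𝓝 ((∫ u in Ioi 0, μ u) * c)) := by
  set F : ℝ → ℝ → ℝ := fun t => (Ioc 0 t).indicator fun u => μ u * f (t - u)
  have hF : ∀ t, 0 ≤ t → halfLineConv μ f t = ∫ u in Ioi 0, F t u := fun t ht => by
    rw [halfLineConv_eq_setIntegral ht, setIntegral_indicator measurableSet_Ioc,
      inter_eq_self_of_subset_right Ioc_subset_Ioi_self]
  have hconv : Tendsto (fun t => ∫ u in Ioi 0, F t u) atTop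
      (𝓝 (∫ u in Ioi 0, μ u * c)) := by
    refine tendsto_integral_filter_of_dominated_convergence (fun u => ‖μ u‖ * M)
      (Eventually.of_forall fun t => ?_) (Eventually.of_forall fun t => ?_)
      (hμ.norm.mul_const M) ?_
    · exact ((integrableOn_mul_comp_sub hμ hf hM t).integrable_indicator
        measurableSet_Ioc).aestronglyMeasurable.restrict
    · refine Eventually.of_forall fun u => ?_
      by_cases hu : u ∈ Ioc 0 t
      · simp only [F, indicator_of_mem hu, norm_mul]
        exact mul_le_mul_of_nonneg_left (hM _ (sub_nonneg.2 hu.2)) (norm_nonneg _)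
      · simp only [F, indicator_of_notMem hu, norm_zero]
        exact mul_nonneg (norm_nonneg _) ((abs_nonneg _).trans (hM 0 le_rfl))
    · filter_upwards [ae_restrict_mem measurableSet_Ioi] with u hu
      refine (tendsto_const_nhds.mul (hlim.comp (tendsto_atTop_add_const_right _ (-u)
        tendsto_id))).congr' ?_
      filter_upwards [eventually_ge_atTop u] with t ht
      simp only [F, indicator_of_mem (show u ∈ Ioc 0 t from ⟨hu, ht⟩)]
      rfl
  rw [← integral_mul_const]
  exact hconv.congr' (eventually_ge_atTop 0 |>.mono fun t ht => (hF t ht).symm)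

variable {lam h : ℝ → ℝ} {lamInf : ℝ}

theorem eventually_lt_of_renewal (hμ_nonneg : ∀ u, 0 < u → 0 ≤ μ u)
    (hμ : IntegrableOn μ (Ioi 0)) (hn : ∫ u in Ioi 0, μ u < 1)
    (hlam : Tendsto lam atTop (𝓝 lamInf)) (hh : Measurable h) (hM : ∀ t, 0 ≤ t → |h t| ≤ M)
    (hren : ∀ t, 0 ≤ t → h t = lam t + halfLineConv μ h t) {b : ℝ}
    (hb : lamInf / (1 - ∫ u in Ioi 0, μ u) < b) :
    ∀ᶠ t in atTop, h t < b := by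
  set n := ∫ u in Ioi 0, μ u
  have hh_le : ∀ᶠ t in atTop, h t ≤ M :=
    eventually_ge_atTop 0 |>.mono fun t ht => (abs_le.1 (hM t ht)).2
  have hh_ge : ∀ᶠ t in atTop, -M ≤ h t :=
    eventually_ge_atTop 0 |>.mono fun t ht => (abs_le.1 (hM t ht)).1
  set U := limsup h atTop
  have hU_le : ∀ c, U < c → U ≤ lamInf + n * c := fun c hc => by
    have hev : ∀ᶠ t in atTop, h t < c :=
      eventually_lt_of_limsup_lt hc (isBoundedUnder_of_eventually_le hh_le)
    have hcM : ∀ s, 0 ≤ s → |max (h s) c| ≤ max M |c| := fun s hs =>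
      abs_max_le_max_abs_abs.trans (max_le_max_right _ (hM s hs))
    have hlim : Tendsto (fun t => lam t + halfLineConv μ (fun s => max (h s) c) t) atTop
        (𝓝 (lamInf + n * c)) :=
      hlam.add (tendsto_halfLineConv hμ (hh.max measurable_const) hcM
        (tendsto_const_nhds.congr' (hev.mono fun t ht => (max_eq_right ht.le).symm)))
    calc U ≤ limsup (fun t => lam t + halfLineConv μ (fun s => max (h s) c) t) atTop := by
          refine limsup_le_limsup ?_ (isCoboundedUnder_le_of_eventually_le _ hh_ge)
            hlim.isBoundedUnder_le
          filter_upwards [eventually_ge_atTop 0] with t ht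
          rw [hren t ht]
          gcongr
          exact halfLineConv_mono hμ_nonneg hμ hh (hh.max measurable_const)
            (fun s hs => (hM s hs).trans (le_max_left _ _)) hcM (fun s => le_max_left _ _) ht
      _ = lamInf + n * c := hlim.limsup_eq
  have hU : U ≤ lamInf + n * U :=
    ge_of_tendsto ((continuous_const.add (continuous_const.mul continuous_id)).tendsto U
      |>.mono_left nhdsWithin_le_nhds) (eventually_nhdsWithin_of_forall (s := Ioi U) hU_le)
  have hUb : U < b := by
    refine lt_of_le_of_lt ?_ hb
    rw [le_div_iff₀ (sub_pos.2 hn)]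
    linarith
  exact eventually_lt_of_limsup_lt hUb (isBoundedUnder_of_eventually_le hh_le)

theorem tendsto_of_renewal (hμ_nonneg : ∀ u, 0 < u → 0 ≤ μ u)
    (hμ : IntegrableOn μ (Ioi 0)) (hn : ∫ u in Ioi 0, μ u < 1)
    (hlam : Tendsto lam atTop (𝓝 lamInf)) (hh : Measurable h) (hM : ∀ t, 0 ≤ t → |h t| ≤ M)
    (hren : ∀ t, 0 ≤ t → h t = lam t + halfLineConv μ h t) :
    Tendsto h atTop (𝓝 (lamInf / (1 - ∫ u in Ioi 0, μ u))) := by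
  refine tendsto_order.2 ⟨fun b hb => ?_, fun b hb =>
    eventually_lt_of_renewal hμ_nonneg hμ hn hlam hh hM hren hb⟩
  have hneg := eventually_lt_of_renewal hμ_nonneg hμ hn hlam.neg hh.neg
    (fun t ht => (abs_neg (h t)).trans_le (hM t ht))
    (fun t ht => by simp only [Pi.neg_apply, halfLineConv_neg, hren t ht, neg_add])
    (b := -b) (by rwa [neg_div, neg_lt_neg_iff])
  exact hneg.mono fun t ht => neg_lt_neg_iff.1 ht

end

theorem hawkes_expected_intensity_limit_general
    (α β lamInf : ℝ) (hα : 0 < α) (hαβ : α < β)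
    (lam h : ℝ → ℝ)
    (hlam_lim : Tendsto lam atTop (nhds lamInf))
    (hh_meas : Measurable h)
    (hh_nonneg : ∀ t, 0 ≤ t → 0 ≤ h t)
    (hh_bdd : ∃ M : ℝ, ∀ t, 0 ≤ t → h t ≤ M)
    (hrenewal : ∀ t, 0 ≤ t →
      h t = lam t + ∫ s in (0:ℝ)..t, α * Real.exp (-β * (t - s)) * h s) :
    Tendsto h atTop (nhds (lamInf / (1 - α / β))) := by
  obtain ⟨M, hM⟩ := hh_bdd
  have hβ : 0 < β := hα.trans hαβ
  have hμ : IntegrableOn (fun u => α * Real.exp (-β * u)) (Ioi 0) :=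
    (exp_neg_integrableOn_Ioi 0 hβ).const_mul α
  have hn : ∫ u in Ioi 0, α * Real.exp (-β * u) = α / β := by
    rw [integral_const_mul, integral_exp_mul_Ioi (neg_lt_zero.2 hβ), mul_zero, Real.exp_zero,
      neg_div_neg_eq, mul_one_div]
  have hlim := tendsto_of_renewal (fun u _ => by positivity) hμ (by rwa [hn, div_lt_one hβ])
    hlam_lim hh_meas (fun t ht => (abs_of_nonneg (hh_nonneg t ht)).trans_le (hM t ht)) hrenewal
  rwa [hn] at hlim

/-- Renewal theorem for the expected intensity of a Hawkes process with exponential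
excitation kernel `μ(t) = α·exp(−βt)`, `0 < α < β`: if the bounded measurable background
intensity `λ` converges to `λ∞` at infinity and the bounded measurable function `h`
solves the renewal equation `h(t) = λ(t) + ∫_0^t α e^{−β(t−s)} h(s) ds` on `[0,∞)`,
then `h(t) → λ∞ / (1 − α/β)` as `t → ∞`. -/
theorem hawkes_expected_intensity_limit
    (α β lamInf : ℝ) (hα : 0 < α) (hαβ : α < β)
    (lam h : ℝ → ℝ)
    (hlam_meas : Measurable lam)
    (hlam_nonneg : ∀ t, 0 ≤ t → 0 ≤ lam t)
    (hlam_bdd : ∃ M : ℝ, ∀ t, 0 ≤ t → lam t ≤ M)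
    (hlam_lim : Tendsto lam atTop (nhds lamInf))
    (hh_meas : Measurable h)
    (hh_nonneg : ∀ t, 0 ≤ t → 0 ≤ h t)
    (hh_bdd : ∃ M : ℝ, ∀ t, 0 ≤ t → h t ≤ M)
    (hrenewal : ∀ t, 0 ≤ t →
      h t = lam t + ∫ s in (0:ℝ)..t, α * Real.exp (-β * (t - s)) * h s) :
    Tendsto h atTop (nhds (lamInf / (1 - α / β))) :=
  hawkes_expected_intensity_limit_general α β lamInf hα hαβ lam h hlam_lim hh_meas hh_nonneg hh_bdd
    hrenewal
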